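/- For every finite simple graph G with at least one vertex and every binary sequence S, the ratio e_t / n_t of the number of edges to the number of vertices of ILM^t(S,G) tends to infinity as t → ∞ (densification). -/

import Mathlib

open SimpleGraph

/-- Transitive step: each vertex `x` gets a clone `x'` adjacent to the closed
neighborhood of `x`. Original vertices are `Sum.inl`, clones are `Sum.inr`. -/
def LTstep {V : Type} (G : SimpleGraph V) : SimpleGraph (V ⊕ V) where
  Adj x y :=
    match x, y with
    | Sum.inl a, Sum.inl b => G.Adj a b
    | Sum.inl a, Sum.inr b => a = b ∨ G.Adj a b
    | Sum.inr a, Sum.inl b => b = a ∨ G.Adj b a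
    | Sum.inr _, Sum.inr _ => False
  symm := by
    constructor
    rintro (a|a) (b|b) h
    · exact h.symm
    · exact h
    · exact h
    · exact h.elim
  loopless := by
    constructor
    rintro (a|a) h
    · exact G.ne_of_adj h rfl
    · exact h

/-- Anti-transitive step: each vertex `x` gets an anti-clone `x*` adjacent to the
complement of the closed neighborhood of `x`. -/
def LATstep {V : Type} (G : SimpleGraph V) : SimpleGraph (V ⊕ V) where
  Adj x y :=
    match x, y with
    | Sum.inl a, Sum.inl b => G.Adj a b
    | Sum.inl a, Sum.inr b => a ≠ b ∧ ¬ G.Adj a b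
    | Sum.inr a, Sum.inl b => b ≠ a ∧ ¬ G.Adj b a
    | Sum.inr _, Sum.inr _ => False
  symm := by
    constructor
    rintro (a|a) (b|b) h
    · exact h.symm
    · exact h
    · exact h
    · exact h.elim
  loopless := by
    constructor
    rintro (a|a) h
    · exact G.ne_of_adj h rfl
    · exact h

/-- The vertex type of the `t`-th iterated local model graph. -/
def ILMVertex (V : Type) : ℕ → Type
  | 0 => V
  | t + 1 => ILMVertex V t ⊕ ILMVertex V t

instance ILMVertex.fintype {V : Type} [Fintype V] : ∀ t, Fintype (ILMVertex V t)
  | 0 => inferInstanceAs (Fintype V)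
  | t + 1 =>
    letI := ILMVertex.fintype (V := V) t
    inferInstanceAs (Fintype (ILMVertex V t ⊕ ILMVertex V t))

instance ILMVertex.nonempty {V : Type} [Nonempty V] : ∀ t, Nonempty (ILMVertex V t)
  | 0 => inferInstanceAs (Nonempty V)
  | t + 1 =>
    letI := ILMVertex.nonempty (V := V) t
    inferInstanceAs (Nonempty (ILMVertex V t ⊕ ILMVertex V t))

/-- The iterated local model: at step `t` apply a transitive step if `S t = true`
(i.e. `s_t = 1`) and an anti-transitive step if `S t = false` (i.e. `s_t = 0`). -/
def ILM {V : Type} (S : ℕ → Bool) (G : SimpleGraph V) : (t : ℕ) → SimpleGraph (ILMVertex V t)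
  | 0 => G
  | t + 1 => if S t then LTstep (ILM S G t) else LATstep (ILM S G t)

set_option linter.unusedSectionVars false

section AuxCounting

open Finset

variable {V : Type} [Fintype V]

@[simp] lemma LTstep_adj_inl_inl (G : SimpleGraph V) (a b : V) :
    (LTstep G).Adj (Sum.inl a) (Sum.inl b) ↔ G.Adj a b := Iff.rfl

@[simp] lemma LTstep_adj_inl_inr (G : SimpleGraph V) (a b : V) :
    (LTstep G).Adj (Sum.inl a) (Sum.inr b) ↔ (a = b ∨ G.Adj a b) := Iff.rfl

@[simp] lemma LTstep_adj_inr_inl (G : SimpleGraph V) (a b : V) :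
    (LTstep G).Adj (Sum.inr a) (Sum.inl b) ↔ (b = a ∨ G.Adj b a) := Iff.rfl

@[simp] lemma LTstep_adj_inr_inr (G : SimpleGraph V) (a b : V) :
    (LTstep G).Adj (Sum.inr a) (Sum.inr b) ↔ False := Iff.rfl

@[simp] lemma LATstep_adj_inl_inl (G : SimpleGraph V) (a b : V) :
    (LATstep G).Adj (Sum.inl a) (Sum.inl b) ↔ G.Adj a b := Iff.rfl

@[simp] lemma LATstep_adj_inl_inr (G : SimpleGraph V) (a b : V) :
    (LATstep G).Adj (Sum.inl a) (Sum.inr b) ↔ (a ≠ b ∧ ¬ G.Adj a b) := Iff.rfl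

@[simp] lemma LATstep_adj_inr_inl (G : SimpleGraph V) (a b : V) :
    (LATstep G).Adj (Sum.inr a) (Sum.inl b) ↔ (b ≠ a ∧ ¬ G.Adj b a) := Iff.rfl

@[simp] lemma LATstep_adj_inr_inr (G : SimpleGraph V) (a b : V) :
    (LATstep G).Adj (Sum.inr a) (Sum.inr b) ↔ False := Iff.rfl

lemma filter_sum_card {α β : Type} [Fintype α] [Fintype β] (p : α ⊕ β → Prop)
    [DecidablePred p] :
    (Finset.univ.filter p).card
      = (Finset.univ.filter fun a => p (Sum.inl a)).card
        + (Finset.univ.filter fun b => p (Sum.inr b)).card := by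
  classical
  rw [← Fintype.card_subtype, ← Fintype.card_subtype, ← Fintype.card_subtype,
    ← Fintype.card_sum]
  exact Fintype.card_congr Equiv.subtypeSum

lemma degree_eq_filter (G : SimpleGraph V) [DecidableRel G.Adj] (a : V) :
    G.degree a = (Finset.univ.filter fun b => G.Adj a b).card := by
  have h := SimpleGraph.neighborFinset_eq_filter G (v := a)
  exact congrArg Finset.card h

lemma filter_closed_card (G : SimpleGraph V) [DecidableRel G.Adj] [DecidableEq V] (a : V) :
    (Finset.univ.filter fun b => a = b ∨ G.Adj a b).card = G.degree a + 1 := by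
  have h : (Finset.univ.filter fun b => a = b ∨ G.Adj a b)
      = insert a (Finset.univ.filter fun b => G.Adj a b) := by
    ext b
    simp only [mem_filter, mem_univ, true_and, mem_insert]
    rw [eq_comm]
  rw [h, Finset.card_insert_of_notMem (by simp), ← degree_eq_filter]

lemma filter_closed_card' (G : SimpleGraph V) [DecidableRel G.Adj] [DecidableEq V] (a : V) :
    (Finset.univ.filter fun b => b = a ∨ G.Adj b a).card = G.degree a + 1 := by
  have h : (Finset.univ.filter fun b => b = a ∨ G.Adj b a)
      = (Finset.univ.filter fun b => a = b ∨ G.Adj a b) := by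
    ext b
    simp only [mem_filter, mem_univ, true_and]
    rw [G.adj_comm b a, eq_comm]
  rw [h, filter_closed_card]

lemma LT_degree_inl (G : SimpleGraph V) [DecidableRel G.Adj] [DecidableEq V]
    [DecidableRel (LTstep G).Adj] (a : V) :
    (LTstep G).degree (Sum.inl a) = 2 * G.degree a + 1 := by
  rw [degree_eq_filter (LTstep G) (Sum.inl a), filter_sum_card]
  simp only [LTstep_adj_inl_inl, LTstep_adj_inl_inr]
  rw [← degree_eq_filter G a, filter_closed_card]
  ring

lemma LT_degree_inr (G : SimpleGraph V) [DecidableRel G.Adj] [DecidableEq V]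
    [DecidableRel (LTstep G).Adj] (a : V) :
    (LTstep G).degree (Sum.inr a) = G.degree a + 1 := by
  rw [degree_eq_filter (LTstep G) (Sum.inr a), filter_sum_card]
  simp only [LTstep_adj_inr_inl, LTstep_adj_inr_inr]
  rw [filter_closed_card', Finset.filter_false, Finset.card_empty]

lemma filter_anti_card (G : SimpleGraph V) [DecidableRel G.Adj] [DecidableEq V] (a : V) :
    (Finset.univ.filter fun b => ¬ a = b ∧ ¬ G.Adj a b).card + (G.degree a + 1)
      = Fintype.card V := by
  have h := Finset.card_filter_add_card_filter_not
    (s := (Finset.univ : Finset V)) (p := fun b => a = b ∨ G.Adj a b)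
  rw [filter_closed_card, Finset.card_univ] at h
  simp only [not_or] at h
  omega

lemma filter_anti_card' (G : SimpleGraph V) [DecidableRel G.Adj] [DecidableEq V] (a : V) :
    (Finset.univ.filter fun b => ¬ b = a ∧ ¬ G.Adj b a).card + (G.degree a + 1)
      = Fintype.card V := by
  have h : (Finset.univ.filter fun b => ¬ b = a ∧ ¬ G.Adj b a)
      = (Finset.univ.filter fun b => ¬ a = b ∧ ¬ G.Adj a b) := by
    ext b
    simp only [mem_filter, mem_univ, true_and]
    rw [G.adj_comm b a, eq_comm]
  rw [h]
  exact filter_anti_card G a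

lemma LAT_degree_inl (G : SimpleGraph V) [DecidableRel G.Adj] [DecidableEq V]
    [DecidableRel (LATstep G).Adj] (a : V) :
    (LATstep G).degree (Sum.inl a) + 1 = Fintype.card V := by
  rw [degree_eq_filter (LATstep G) (Sum.inl a), filter_sum_card]
  simp only [LATstep_adj_inl_inl, LATstep_adj_inl_inr, ne_eq]
  rw [← degree_eq_filter G a]
  have h := filter_anti_card G a
  omega

lemma LAT_degree_inr (G : SimpleGraph V) [DecidableRel G.Adj] [DecidableEq V]
    [DecidableRel (LATstep G).Adj] (a : V) :
    (LATstep G).degree (Sum.inr a) + (G.degree a + 1) = Fintype.card V := by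
  rw [degree_eq_filter (LATstep G) (Sum.inr a), filter_sum_card]
  simp only [LATstep_adj_inr_inl, LATstep_adj_inr_inr, ne_eq]
  rw [Finset.filter_false, Finset.card_empty]
  have h := filter_anti_card' G a
  omega

lemma LT_edge_card (G : SimpleGraph V) :
    Nat.card (LTstep G).edgeSet = 3 * Nat.card G.edgeSet + Fintype.card V := by
  classical
  have e1 : Nat.card (LTstep G).edgeSet = (LTstep G).edgeFinset.card := by
    rw [Nat.card_eq_fintype_card, SimpleGraph.edgeFinset_card]
  have e2 : Nat.card G.edgeSet = G.edgeFinset.card := by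
    rw [Nat.card_eq_fintype_card, SimpleGraph.edgeFinset_card]
  have hLT : ∑ a : V, (2 * G.degree a + 1) + ∑ a : V, (G.degree a + 1)
      = 2 * (LTstep G).edgeFinset.card := by
    rw [← SimpleGraph.sum_degrees_eq_twice_card_edges, Fintype.sum_sum_type]
    congr 1
    · exact Finset.sum_congr rfl fun a _ => (LT_degree_inl G a).symm
    · exact Finset.sum_congr rfl fun a _ => (LT_degree_inr G a).symm
  have hs1 : ∑ a : V, (2 * G.degree a + 1)
      = 2 * ∑ a : V, G.degree a + Fintype.card V := by
    rw [Finset.sum_add_distrib, Finset.sum_const, Finset.card_univ, ← Finset.mul_sum,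
      smul_eq_mul, mul_one]
  have hs2 : ∑ a : V, (G.degree a + 1) = ∑ a : V, G.degree a + Fintype.card V := by
    rw [Finset.sum_add_distrib, Finset.sum_const, Finset.card_univ, smul_eq_mul, mul_one]
  have hG := SimpleGraph.sum_degrees_eq_twice_card_edges G
  omega

lemma LAT_edge_card (G : SimpleGraph V) :
    Nat.card (LATstep G).edgeSet + Nat.card G.edgeSet + Fintype.card V
      = Fintype.card V * Fintype.card V := by
  classical
  have e1 : Nat.card (LATstep G).edgeSet = (LATstep G).edgeFinset.card := by
    rw [Nat.card_eq_fintype_card, SimpleGraph.edgeFinset_card]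
  have e2 : Nat.card G.edgeSet = G.edgeFinset.card := by
    rw [Nat.card_eq_fintype_card, SimpleGraph.edgeFinset_card]
  have hC : ∑ a : V, (LATstep G).degree (Sum.inl a)
        + ∑ a : V, (LATstep G).degree (Sum.inr a)
      = 2 * (LATstep G).edgeFinset.card := by
    rw [← SimpleGraph.sum_degrees_eq_twice_card_edges, Fintype.sum_sum_type]
  have hA1 : ∑ a : V, ((LATstep G).degree (Sum.inl a) + 1)
      = Fintype.card V * Fintype.card V := by
    calc ∑ a : V, ((LATstep G).degree (Sum.inl a) + 1)
        = ∑ _a : V, Fintype.card V := Finset.sum_congr rfl fun a _ => LAT_degree_inl G a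
      _ = Fintype.card V * Fintype.card V := by
          rw [Finset.sum_const, Finset.card_univ, smul_eq_mul]
  have hA2 : ∑ a : V, ((LATstep G).degree (Sum.inl a) + 1)
      = ∑ a : V, (LATstep G).degree (Sum.inl a) + Fintype.card V := by
    rw [Finset.sum_add_distrib, Finset.sum_const, Finset.card_univ, smul_eq_mul, mul_one]
  have hB1 : ∑ a : V, ((LATstep G).degree (Sum.inr a) + (G.degree a + 1))
      = Fintype.card V * Fintype.card V := by
    calc ∑ a : V, ((LATstep G).degree (Sum.inr a) + (G.degree a + 1))
        = ∑ _a : V, Fintype.card V := Finset.sum_congr rfl fun a _ => LAT_degree_inr G a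
      _ = Fintype.card V * Fintype.card V := by
          rw [Finset.sum_const, Finset.card_univ, smul_eq_mul]
  have hB2 : ∑ a : V, ((LATstep G).degree (Sum.inr a) + (G.degree a + 1))
      = ∑ a : V, (LATstep G).degree (Sum.inr a) + (∑ a : V, G.degree a + Fintype.card V) := by
    rw [Finset.sum_add_distrib, Finset.sum_add_distrib, Finset.sum_const, Finset.card_univ,
      smul_eq_mul, mul_one]
  have hG := SimpleGraph.sum_degrees_eq_twice_card_edges G
  omega

lemma edge_bound (G : SimpleGraph V) :
    2 * Nat.card G.edgeSet + Fintype.card V ≤ Fintype.card V * Fintype.card V := by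
  classical
  have e2 : Nat.card G.edgeSet = G.edgeFinset.card := by
    rw [Nat.card_eq_fintype_card, SimpleGraph.edgeFinset_card]
  have hG := SimpleGraph.sum_degrees_eq_twice_card_edges G
  have hle : ∑ a : V, (G.degree a + 1) ≤ ∑ _a : V, Fintype.card V :=
    Finset.sum_le_sum fun a _ => G.degree_lt_card_verts a
  rw [Finset.sum_add_distrib, Finset.sum_const, Finset.card_univ, smul_eq_mul, mul_one,
    Finset.sum_const, Finset.card_univ, smul_eq_mul] at hle
  omega

end AuxCounting

section Main

lemma ILMVertex_card (V : Type) [Fintype V] :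
    ∀ t, Nat.card (ILMVertex V t) = 2 ^ t * Fintype.card V
  | 0 => by
    rw [pow_zero, one_mul]
    exact Nat.card_eq_fintype_card
  | t + 1 => by
    have ih := ILMVertex_card V t
    show Nat.card (ILMVertex V t ⊕ ILMVertex V t) = _
    rw [Nat.card_sum, ih, pow_succ]
    ring

lemma main_bound {V : Type} [Fintype V] [Nonempty V] (G : SimpleGraph V) (S : ℕ → Bool) :
    ∀ t : ℕ, ((t : ℝ) - 2) * (Nat.card (ILMVertex V t) : ℝ)
      ≤ 8 * (Nat.card (ILM S G t).edgeSet : ℝ) := by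
  intro t
  induction t with
  | zero =>
    have h1 : (0:ℝ) ≤ (Nat.card (ILMVertex V 0) : ℝ) := Nat.cast_nonneg _
    have h2 : (0:ℝ) ≤ (Nat.card (ILM S G 0).edgeSet : ℝ) := Nat.cast_nonneg _
    push_cast
    nlinarith
  | succ t ih =>
    have hn' : Nat.card (ILMVertex V (t + 1)) = 2 * Nat.card (ILMVertex V t) := by
      show Nat.card (ILMVertex V t ⊕ ILMVertex V t) = 2 * Nat.card (ILMVertex V t)
      rw [Nat.card_sum]
      omega
    have hnpos : 0 < Nat.card (ILMVertex V t) := Nat.card_pos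
    have htn : t + 1 ≤ Nat.card (ILMVertex V t) := by
      have h1 : t < 2 ^ t := Nat.lt_two_pow_self
      have h2 : 2 ^ t ≤ 2 ^ t * Fintype.card V :=
        Nat.le_mul_of_pos_right _ Fintype.card_pos
      have h3 := ILMVertex_card V t
      omega
    have hnR : (0:ℝ) ≤ ((Nat.card (ILMVertex V t)) : ℝ) := Nat.cast_nonneg _
    have htR : (0:ℝ) ≤ (t : ℝ) := Nat.cast_nonneg _
    have heR : (0:ℝ) ≤ ((Nat.card (ILM S G t).edgeSet) : ℝ) := Nat.cast_nonneg _
    cases hS : S t with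
    | true =>
      have hstep : ILM S G (t + 1) = LTstep (ILM S G t) := by
        show (if S t = true then LTstep (ILM S G t) else LATstep (ILM S G t)) = _
        rw [hS]; rfl
      have he' : Nat.card (ILM S G (t + 1)).edgeSet
          = 3 * Nat.card (ILM S G t).edgeSet + Nat.card (ILMVertex V t) := by
        rw [hstep]
        have h := LT_edge_card (ILM S G t)
        rwa [← Nat.card_eq_fintype_card (α := ILMVertex V t)] at h
      rw [hn', he']
      push_cast
      nlinarith [mul_nonneg htR hnR]
    | false =>
      have hstep : ILM S G (t + 1) = LATstep (ILM S G t) := by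
        show (if S t = true then LTstep (ILM S G t) else LATstep (ILM S G t)) = _
        rw [hS]; rfl
      have he' : Nat.card (ILM S G (t + 1)).edgeSet + Nat.card (ILM S G t).edgeSet
            + Nat.card (ILMVertex V t)
          = Nat.card (ILMVertex V t) * Nat.card (ILMVertex V t) := by
        rw [hstep]
        have h := LAT_edge_card (ILM S G t)
        rwa [← Nat.card_eq_fintype_card (α := ILMVertex V t)] at h
      have hb : 2 * Nat.card (ILM S G t).edgeSet + Nat.card (ILMVertex V t)
          ≤ Nat.card (ILMVertex V t) * Nat.card (ILMVertex V t) := by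
        have h := edge_bound (ILM S G t)
        rwa [← Nat.card_eq_fintype_card (α := ILMVertex V t)] at h
      rw [hn']
      have he'R : ((Nat.card (ILM S G (t + 1)).edgeSet) : ℝ)
            + ((Nat.card (ILM S G t).edgeSet) : ℝ) + ((Nat.card (ILMVertex V t)) : ℝ)
          = ((Nat.card (ILMVertex V t)) : ℝ) * ((Nat.card (ILMVertex V t)) : ℝ) := by
        exact_mod_cast congrArg (Nat.cast : ℕ → ℝ) he'
      have hbR : 2 * ((Nat.card (ILM S G t).edgeSet) : ℝ) + ((Nat.card (ILMVertex V t)) : ℝ)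
          ≤ ((Nat.card (ILMVertex V t)) : ℝ) * ((Nat.card (ILMVertex V t)) : ℝ) := by
        exact_mod_cast hb
      have htnR : (t : ℝ) + 1 ≤ ((Nat.card (ILMVertex V t)) : ℝ) := by exact_mod_cast htn
      push_cast
      nlinarith [mul_le_mul_of_nonneg_right htnR hnR, mul_nonneg htR hnR]

end Main

/-- For every graph `G` with at least one vertex and every binary
sequence `S`, the edge-to-vertex ratio of `ILM^t(S,G)` tends to infinity. -/
theorem ILM_densification {V : Type} [Fintype V] [Nonempty V] (G : SimpleGraph V)
    (S : ℕ → Bool) :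
    Filter.Tendsto
      (fun t : ℕ => (Nat.card (ILM S G t).edgeSet : ℝ) / (Nat.card (ILMVertex V t) : ℝ))
      Filter.atTop Filter.atTop := by
  have hlow : ∀ t : ℕ, ((t : ℝ) - 2) / 8
      ≤ (Nat.card (ILM S G t).edgeSet : ℝ) / (Nat.card (ILMVertex V t) : ℝ) := by
    intro t
    have hnpos : (0:ℝ) < (Nat.card (ILMVertex V t) : ℝ) := by
      exact_mod_cast (Nat.card_pos : 0 < Nat.card (ILMVertex V t))
    rw [div_le_div_iff₀ (by norm_num) hnpos]
    linarith [main_bound G S t]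
  refine Filter.tendsto_atTop_mono hlow ?_
  have h1 : Filter.Tendsto (fun t : ℕ => (t : ℝ) - 2) Filter.atTop Filter.atTop := by
    have := Filter.tendsto_atTop_add_const_right Filter.atTop (-2 : ℝ)
      (tendsto_natCast_atTop_atTop (R := ℝ))
    simpa [sub_eq_add_neg] using this
  exact h1.atTop_div_const (by norm_num)
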